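/- For every integer d ≥ 2 there exists γ₀ ∈ (0,1) such that for every γ ∈ (γ₀, 1) there exists a constant C₂ > 0 with the following property. For all reals x ≥ C₂ and y ≥ 1, every integer n ≥ x, and every point p_v ∈ ℝ^d with |p_v| ≤ n − x, there exists ε₀ > 0 such that for every ε ∈ (0, ε₀) for which p_v is a point of the lattice εℤ^d, and for every (1,y)-annulus embedding f of G_{n,d}(x,ε), there exist N_γ vertices of G_{n,d}(x,ε), each adjacent in G_{n,d}(x,ε) to the vertex v located at p_v, whose positions in the natural embedding are pairwise at Euclidean distance more than x and whose images under f are pairwise at Euclidean distance more than y. -/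

import Mathlib

open Metric


/-- `p ∈ ℝ^d` is a point of the scaled integer lattice `εℤ^d`. -/
def InLattice {d : ℕ} (ε : ℝ) (p : EuclideanSpace ℝ (Fin d)) : Prop :=
  ∀ i, ∃ z : ℤ, p i = ε * z

/-- The vertex set of `G_{n,d}(x,ε)`: points of `εℤ^d` in the closed ball `B(0,n)`. -/
def GndVert (d n : ℕ) (ε : ℝ) : Type :=
  {p : EuclideanSpace ℝ (Fin d) // InLattice ε p ∧ ‖p‖ ≤ (n : ℝ)}

/-- The graph `G_{n,d}(x,ε)`: two distinct lattice points of `B(0,n)` are adjacent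
iff their Euclidean distance lies in `[1, x]`. Its natural `(1,x)`-annulus
embedding is the identity on the vertex set. -/
def Gnd (d n : ℕ) (x ε : ℝ) : SimpleGraph (GndVert d n ε) where
  Adj u v := u ≠ v ∧ dist u.1 v.1 ∈ Set.Icc 1 x
  symm := ⟨fun u v ⟨h, h'⟩ => ⟨h.symm, by rwa [dist_comm]⟩⟩
  loopless := ⟨fun u h => h.1 rfl⟩

/-- `f` is a `(1,y)`-annulus embedding of the simple graph `G` in `ℝ^d`:
an injective map such that two distinct vertices are adjacent iff their
images are at Euclidean distance in `[1, y]`. -/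
def IsAnnulusEmbedding {d : ℕ} {V : Type*} (G : SimpleGraph V) (R₁ R₂ : ℝ)
    (f : V → EuclideanSpace ℝ (Fin d)) : Prop :=
  Function.Injective f ∧
    ∀ u v : V, u ≠ v → (G.Adj u v ↔ dist (f u) (f v) ∈ Set.Icc R₁ R₂)
/-- `Ngamma d γ`: the maximal number of points in the closed ball
`B(0,γ) ⊆ ℝ^d` that are pairwise at Euclidean distance more than `1`. -/
noncomputable def Ngamma (d : ℕ) (γ : ℝ) : ℕ :=
  sSup {m : ℕ | ∃ S : Finset (EuclideanSpace ℝ (Fin d)), S.card = m ∧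
    (↑S : Set (EuclideanSpace ℝ (Fin d))) ⊆ Metric.closedBall 0 γ ∧
    ∀ p ∈ S, ∀ q ∈ S, p ≠ q → 1 < dist p q}

lemma exists_packing_bound (d : ℕ) : ∃ K : ℕ,
    ∀ (ξ : EuclideanSpace ℝ (Fin d)) (F : Finset (EuclideanSpace ℝ (Fin d))),
      (∀ p ∈ F, dist p ξ ≤ 1) → (∀ p ∈ F, ∀ q ∈ F, p ≠ q → 1 ≤ dist p q) →
      F.card ≤ K := by
  classical
  obtain ⟨t, htf, hcov⟩ :=
    (totallyBounded_iff.mp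
      (isCompact_closedBall (0 : EuclideanSpace ℝ (Fin d)) 1).totallyBounded)
      (1/2) (by norm_num)
  refine ⟨htf.toFinset.card, fun ξ F hball hsep => ?_⟩
  have hmem : ∀ p ∈ F, ∃ c ∈ htf.toFinset, p - ξ ∈ ball c (1/2) := by
    intro p hp
    have hpc : p - ξ ∈ Metric.closedBall (0 : EuclideanSpace ℝ (Fin d)) 1 := by
      have : ‖p - ξ‖ ≤ 1 := by rw [← dist_eq_norm]; exact hball p hp
      simpa [mem_closedBall, dist_eq_norm] using this
    obtain ⟨c, hc⟩ := Set.mem_iUnion₂.mp (hcov hpc)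
    exact ⟨c, htf.mem_toFinset.mpr hc.1, hc.2⟩
  choose g hg1 hg2 using hmem
  set g' : EuclideanSpace ℝ (Fin d) → EuclideanSpace ℝ (Fin d) :=
    fun p => if h : p ∈ F then g p h else ξ with hg'
  refine Finset.card_le_card_of_injOn g' (fun p hp => by have hp' : p ∈ F := hp; simpa [hg', hp'] using hg1 p hp') ?_
  intro p hp q hq hpq
  simp only [Finset.mem_coe] at hp hq
  rw [hg'] at hpq
  simp only [hp, hq, dif_pos] at hpq
  by_contra hne
  have h1 : dist (p - ξ) (g p hp) < 1/2 := mem_ball.mp (hg2 p hp)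
  have h2 : dist (q - ξ) (g q hq) < 1/2 := mem_ball.mp (hg2 q hq)
  have htri : dist (p - ξ) (q - ξ) ≤ dist (p - ξ) (g q hq) + dist (g q hq) (q - ξ) :=
    dist_triangle _ _ _
  have hd : dist (p - ξ) (q - ξ) = dist p q := dist_sub_right p q ξ
  rw [hpq] at h1
  have h1' : dist (p - ξ) (g q hq) < 1/2 := h1
  rw [dist_comm (g q hq) (q - ξ)] at htri
  have : dist p q < 1 := by rw [← hd]; linarith
  exact absurd (hsep p hp q hq hne) (by linarith)

lemma ngamma_attained (d : ℕ) (γ : ℝ) (hγ1 : γ ≤ 1) :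
    ∃ S : Finset (EuclideanSpace ℝ (Fin d)), S.card = Ngamma d γ ∧
      (↑S : Set (EuclideanSpace ℝ (Fin d))) ⊆ Metric.closedBall 0 γ ∧
      ∀ p ∈ S, ∀ q ∈ S, p ≠ q → 1 < dist p q := by
  obtain ⟨K, hK⟩ := exists_packing_bound d
  have hne : {m : ℕ | ∃ S : Finset (EuclideanSpace ℝ (Fin d)), S.card = m ∧
      (↑S : Set (EuclideanSpace ℝ (Fin d))) ⊆ Metric.closedBall 0 γ ∧
      ∀ p ∈ S, ∀ q ∈ S, p ≠ q → 1 < dist p q}.Nonempty :=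
    ⟨0, ∅, by simp, by simp, by simp⟩
  have hbdd : BddAbove {m : ℕ | ∃ S : Finset (EuclideanSpace ℝ (Fin d)), S.card = m ∧
      (↑S : Set (EuclideanSpace ℝ (Fin d))) ⊆ Metric.closedBall 0 γ ∧
      ∀ p ∈ S, ∀ q ∈ S, p ≠ q → 1 < dist p q} := by
    refine ⟨K, fun m hm => ?_⟩
    obtain ⟨S, hcard, hsub, hsep⟩ := hm
    rw [← hcard]
    refine hK 0 S (fun p hp => ?_) (fun p hp q hq hne => le_of_lt (hsep p hp q hq hne))
    have := hsub (Finset.mem_coe.mpr hp)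
    rw [mem_closedBall] at this
    linarith
  have := Nat.sSup_mem hne hbdd
  exact this

/-- A packing of size `Ngamma d γ` all whose points have norm in `[1-γ, γ]`,
with a positive separation slack `θ`. -/

lemma packing_with_norms (d : ℕ) (hd : 1 ≤ d) (γ : ℝ) (hγ0 : 1/2 < γ) (hγ1 : γ < 1) :
    ∃ (p : Fin (Ngamma d γ) → EuclideanSpace ℝ (Fin d)) (θ : ℝ),
      0 < θ ∧ θ ≤ 1 ∧ (∀ i, 1 - γ ≤ ‖p i‖ ∧ ‖p i‖ ≤ γ) ∧
      (∀ i j, i ≠ j → 1 + θ ≤ dist (p i) (p j)) := by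
  classical
  set N := Ngamma d γ with hN
  obtain ⟨S, hcard, hsub, hsep⟩ := ngamma_attained d γ (le_of_lt hγ1)
  rcases Nat.lt_or_ge N 2 with h2 | h2
  · -- `N ≤ 1`: use the explicit singleton-type packing
    refine ⟨fun _ => γ • (EuclideanSpace.single (⟨0, by omega⟩ : Fin d) (1:ℝ)), 1,
      one_pos, le_refl 1, fun i => ?_, fun i j hij => absurd ?_ hij⟩
    · have : ‖γ • (EuclideanSpace.single (⟨0, by omega⟩ : Fin d) (1:ℝ))‖ = γ := by
        rw [norm_smul, EuclideanSpace.norm_single]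
        simp [abs_of_pos (by linarith : (0:ℝ) < γ)]
      rw [this]
      constructor <;> linarith
    · have hi := i.isLt
      have hj := j.isLt
      exact Fin.ext (by omega)
  · -- `N ≥ 2`: use the attained packing
    set p : Fin N → EuclideanSpace ℝ (Fin d) :=
      fun i => ((S.equivFin.symm (Fin.cast hcard.symm i)) : EuclideanSpace ℝ (Fin d)) with hp
    have hpmem : ∀ i, p i ∈ S := fun i => (S.equivFin.symm (Fin.cast hcard.symm i)).2
    have hpinj : Function.Injective p := by
      intro i j hij
      have := Subtype.coe_injective hij
      have := S.equivFin.symm.injective this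
      exact Fin.ext (by simpa using congrArg Fin.val this)
    have hsep' : ∀ i j, i ≠ j → 1 < dist (p i) (p j) := by
      intro i j hij
      exact hsep _ (hpmem i) _ (hpmem j) (fun h => hij (hpinj h))
    have hnorm : ∀ i, 1 - γ ≤ ‖p i‖ ∧ ‖p i‖ ≤ γ := by
      intro i
      have hub : ∀ q ∈ S, ‖q‖ ≤ γ := by
        intro q hq
        have := hsub (Finset.mem_coe.mpr hq)
        rwa [mem_closedBall, dist_zero_right] at this
      refine ⟨?_, hub _ (hpmem i)⟩
      obtain ⟨q, hqS, hqne⟩ := Finset.exists_mem_ne (by rw [hcard]; omega) (p i)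
      have h1 : 1 < dist (p i) q := hsep _ (hpmem i) q hqS (Ne.symm hqne)
      have h2 : dist (p i) q ≤ ‖p i‖ + ‖q‖ := by
        rw [dist_eq_norm]; exact norm_sub_le _ _
      have := hub q hqS
      linarith
    -- minimal pairwise distance
    have hPne : ((Finset.univ : Finset (Fin N × Fin N)).filter
        (fun ij => ij.1 ≠ ij.2)).Nonempty := by
      refine ⟨(⟨0, by omega⟩, ⟨1, by omega⟩), ?_⟩
      simp only [Finset.mem_filter, Finset.mem_univ, true_and]
      intro h
      simpa using congrArg Fin.val h
    obtain ⟨ij0, hij0mem, hij0min⟩ := Finset.exists_min_image _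
      (fun ij : Fin N × Fin N => dist (p ij.1) (p ij.2)) hPne
    have hij0ne : ij0.1 ≠ ij0.2 := (Finset.mem_filter.mp hij0mem).2
    set θ' : ℝ := dist (p ij0.1) (p ij0.2) - 1 with hθ'
    have hθ'pos : 0 < θ' := by
      have := hsep' _ _ hij0ne
      simp only [hθ']; linarith
    refine ⟨p, min θ' 1, lt_min hθ'pos one_pos, min_le_right _ _, hnorm, ?_⟩
    intro i j hij
    have hmin : dist (p ij0.1) (p ij0.2) ≤ dist (p i) (p j) := by
      refine hij0min (i, j) ?_
      simp only [Finset.mem_filter, Finset.mem_univ, true_and]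
      exact hij
    have : min θ' 1 ≤ θ' := min_le_left _ _
    simp only [hθ'] at hmin ⊢
    linarith

lemma exists_snap {d : ℕ} (ε : ℝ) (hε : 0 < ε) (t : EuclideanSpace ℝ (Fin d)) :
    ∃ z : EuclideanSpace ℝ (Fin d), InLattice ε z ∧ dist z t ≤ ε * d := by
  set z : EuclideanSpace ℝ (Fin d) := WithLp.toLp 2 (fun j => ε * ((round (t j / ε) : ℤ) : ℝ)) with hz
  refine ⟨z, fun i => ⟨round (t i / ε), rfl⟩, ?_⟩
  have hcoord : ∀ j, dist (z j) (t j) ≤ ε / 2 := by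
    intro j
    have h1 : |t j / ε - (round (t j / ε) : ℝ)| ≤ 1/2 := abs_sub_round _
    have h2 : z j - t j = -(ε * (t j / ε - (round (t j / ε) : ℝ))) := by
      simp only [hz]
      field_simp
      ring
    rw [Real.dist_eq, h2, abs_neg, abs_mul, abs_of_pos hε]
    calc ε * |t j / ε - (round (t j / ε) : ℝ)| ≤ ε * (1/2) := by
          exact mul_le_mul_of_nonneg_left h1 (le_of_lt hε)
      _ = ε / 2 := by ring
  rw [EuclideanSpace.dist_eq]
  have hsum : (∑ i : Fin d, dist (z i) (t i) ^ 2) ≤ (d : ℝ) * (ε/2)^2 := by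
    calc (∑ i : Fin d, dist (z i) (t i) ^ 2) ≤ (Finset.univ : Finset (Fin d)).card • ((ε/2)^2) := by
          refine Finset.sum_le_card_nsmul _ _ _ (fun i _ => ?_)
          have := hcoord i
          have h0 : (0:ℝ) ≤ dist (z i) (t i) := dist_nonneg
          nlinarith
      _ = (d : ℝ) * (ε/2)^2 := by
          simp [Finset.card_univ, nsmul_eq_mul]
  calc Real.sqrt (∑ i : Fin d, dist (z i) (t i) ^ 2) ≤ Real.sqrt ((d:ℝ) * (ε/2)^2) :=
        Real.sqrt_le_sqrt hsum
    _ = Real.sqrt d * (ε/2) := by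
        rw [Real.sqrt_mul (by positivity), Real.sqrt_sq (by positivity)]
    _ ≤ (d:ℝ) * (ε/2) := by
        refine mul_le_mul_of_nonneg_right ?_ (by positivity)
        have hs : Real.sqrt (d:ℝ) ^ 2 = (d:ℝ) := Real.sq_sqrt (by positivity)
        have hs0 : 0 ≤ Real.sqrt (d:ℝ) := Real.sqrt_nonneg _
        rcases Nat.eq_zero_or_pos d with h | h
        · simp [h]
        · have h1 : (1:ℝ) ≤ (d:ℝ) := by exact_mod_cast h
          nlinarith
    _ ≤ ε * d := by nlinarith [hε.le]

set_option maxHeartbeats 2000000 in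
/-- For `d ≥ 2` there is `γ₀ ∈ (0,1)` such that for every `γ ∈ (γ₀,1)` there is
`C₂ > 0` with: for all `x ≥ C₂`, `y ≥ 1`, integers `n ≥ x`, vertices `v` of
`G_{n,d}(x,ε)` located at a point of norm at most `n - x`, and all sufficiently
small `ε > 0`, every `(1,y)`-annulus embedding `f` admits `N_γ` neighbours of
`v` that are pairwise at distance more than `x` in the natural embedding and
pairwise at distance more than `y` under `f`. -/
theorem many_far_neighbours (d : ℕ) (hd : 2 ≤ d) :
    ∃ γ₀ : ℝ, 0 < γ₀ ∧ γ₀ < 1 ∧ ∀ γ : ℝ, γ₀ < γ → γ < 1 →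
      ∃ C₂ : ℝ, 0 < C₂ ∧ ∀ x y : ℝ, C₂ ≤ x → 1 ≤ y →
        ∀ n : ℕ, x ≤ (n : ℝ) →
          ∀ pv : EuclideanSpace ℝ (Fin d), ‖pv‖ ≤ (n : ℝ) - x →
            ∃ ε₀ : ℝ, 0 < ε₀ ∧ ∀ ε : ℝ, 0 < ε → ε < ε₀ →
              ∀ v : GndVert d n ε, v.1 = pv →
                ∀ f : GndVert d n ε → EuclideanSpace ℝ (Fin d),
                  IsAnnulusEmbedding (Gnd d n x ε) 1 y f →
                  ∃ T : Finset (GndVert d n ε), T.card = Ngamma d γ ∧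
                    (∀ u ∈ T, (Gnd d n x ε).Adj u v) ∧
                    ∀ u ∈ T, ∀ w ∈ T, u ≠ w →
                      x < dist u.1 w.1 ∧ y < dist (f u) (f w) := by
  classical
  refine ⟨1/2, by norm_num, by norm_num, fun γ hγ0 hγ1 => ?_⟩
  obtain ⟨K, hK⟩ := exists_packing_bound d
  obtain ⟨p, θ, hθ0, hθ1, hpnorm, hpsep⟩ := packing_with_norms d (by omega) γ hγ0 hγ1
  set m : ℕ := (Ngamma d γ - 1) * K + 1 with hmdef
  have hm1 : 1 ≤ m := by omega
  set μ : ℝ := min θ (1 - γ) / 8 with hμdef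
  have hμ0 : 0 < μ := by
    have : 0 < min θ (1 - γ) := lt_min hθ0 (by linarith)
    positivity
  have hμθ : 8 * μ ≤ θ := by
    have := min_le_left θ (1 - γ); rw [hμdef]; linarith
  have hμγ : 8 * μ ≤ 1 - γ := by
    have := min_le_right θ (1 - γ); rw [hμdef]; linarith
  refine ⟨(4 * m + 32) / μ, by positivity, ?_⟩
  intro x y hx hy n hn pv hpv
  have hx0 : 0 < x := lt_of_lt_of_le (by positivity) hx
  have hμx : 4 * (m:ℝ) + 32 ≤ μ * x := by
    rw [div_le_iff₀ hμ0] at hx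
    nlinarith
  have hθx : 8 * (μ * x) ≤ θ * x := by nlinarith
  have hγx : 8 * (μ * x) ≤ (1 - γ) * x := by nlinarith
  have hθxx : θ * x ≤ x := by nlinarith
  have hM1 : (1:ℝ) ≤ (m:ℝ) := by exact_mod_cast hm1
  have hmx : 2 * (m:ℝ) + 2 ≤ x := by linarith
  refine ⟨1 / (8 * ((d:ℝ) + 1)), by positivity, ?_⟩
  intro ε hε0 hε1 v hv f hf
  have hεd : ε * d ≤ 1/8 := by
    have h1 : ε * d ≤ (1 / (8 * ((d:ℝ) + 1))) * d :=
      mul_le_mul_of_nonneg_right (le_of_lt hε1) (by positivity)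
    have h2 : (1 / (8 * ((d:ℝ) + 1))) * d ≤ 1/8 := by
      rw [div_mul_eq_mul_div, div_le_div_iff₀ (by positivity) (by norm_num)]
      nlinarith [Nat.cast_nonneg (α := ℝ) d]
    linarith
  -- the unit vector
  set e₁ : EuclideanSpace ℝ (Fin d) := EuclideanSpace.single (⟨0, by omega⟩ : Fin d) (1:ℝ)
    with he₁def
  have he₁ : ‖e₁‖ = 1 := by rw [he₁def, EuclideanSpace.norm_single]; simp
  -- targets and snapped lattice points
  set tgt : Fin (Ngamma d γ) → Fin m → EuclideanSpace ℝ (Fin d) :=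
    fun i k => pv + x • p i + ((k:ℝ) * 2) • e₁ with htgtdef
  have hsnap : ∀ i k, ∃ z, InLattice ε z ∧ dist z (tgt i k) ≤ ε * d :=
    fun i k => exists_snap ε hε0 _
  choose w hw1 hw2 using hsnap
  have hw2' : ∀ i k, dist (w i k) (tgt i k) ≤ 1/8 := fun i k => le_trans (hw2 i k) hεd
  -- handy facts about `Fin m` casts
  have habs : ∀ k l : Fin m, k ≠ l →
      1 ≤ |(k:ℝ) - (l:ℝ)| ∧ |(k:ℝ) - (l:ℝ)| ≤ (m:ℝ) - 1 := by
    intro k l hkl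
    have hk0 : (0:ℝ) ≤ (k:ℝ) := Nat.cast_nonneg _
    have hl0 : (0:ℝ) ≤ (l:ℝ) := Nat.cast_nonneg _
    have hk1 : (k:ℝ) ≤ (m:ℝ) - 1 := by
      have h := k.isLt
      have : ((k:ℕ):ℝ) + 1 ≤ (m:ℝ) := by exact_mod_cast h
      linarith
    have hl1 : (l:ℝ) ≤ (m:ℝ) - 1 := by
      have h := l.isLt
      have : ((l:ℕ):ℝ) + 1 ≤ (m:ℝ) := by exact_mod_cast h
      linarith
    refine ⟨?_, abs_le.mpr ⟨by linarith, by linarith⟩⟩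
    have hne : (k:ℕ) ≠ (l:ℕ) := fun h => hkl (Fin.ext h)
    rcases Nat.lt_or_ge (k:ℕ) (l:ℕ) with h | h
    · have : ((k:ℕ):ℝ) + 1 ≤ ((l:ℕ):ℝ) := by exact_mod_cast h
      rw [abs_sub_comm, abs_of_nonneg (by linarith)]; linarith
    · have hlt : (l:ℕ) < (k:ℕ) := by omega
      have : ((l:ℕ):ℝ) + 1 ≤ ((k:ℕ):ℝ) := by exact_mod_cast hlt
      rw [abs_of_nonneg (by linarith)]; linarith
  have hkabs : ∀ k : Fin m, (0:ℝ) ≤ (k:ℝ) ∧ (k:ℝ) ≤ (m:ℝ) - 1 := by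
    intro k
    refine ⟨Nat.cast_nonneg _, ?_⟩
    have h := k.isLt
    have : ((k:ℕ):ℝ) + 1 ≤ (m:ℝ) := by exact_mod_cast h
    linarith
  have hxsmul : ∀ u : EuclideanSpace ℝ (Fin d), ‖x • u‖ = x * ‖u‖ := by
    intro u; rw [norm_smul, Real.norm_eq_abs, abs_of_pos hx0]
  have hcsmul : ∀ c : ℝ, ‖c • e₁‖ = |c| := by
    intro c; rw [norm_smul, Real.norm_eq_abs, he₁, mul_one]
  -- products with the packing norms
  have hpxl : ∀ i, (1 - γ) * x ≤ x * ‖p i‖ := by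
    intro i
    nlinarith [(hpnorm i).1, hx0.le, mul_nonneg (sub_nonneg.2 (hpnorm i).1) hx0.le]
  have hpxu : ∀ i, x * ‖p i‖ ≤ γ * x := by
    intro i
    nlinarith [(hpnorm i).2, mul_nonneg (sub_nonneg.2 (hpnorm i).2) hx0.le]
  have hsepx : ∀ i j, i ≠ j → (1 + θ) * x ≤ x * ‖p i - p j‖ := by
    intro i j hij
    have h1 : 1 + θ ≤ ‖p i - p j‖ := by
      have := hpsep i j hij; rwa [dist_eq_norm] at this
    nlinarith [mul_nonneg (sub_nonneg.2 h1) hx0.le]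
  -- distance of snapped points to pv
  have hwpv : ∀ i k,
      x * ‖p i‖ - (2 * (m:ℝ) - 2) - 1/8 ≤ dist (w i k) pv ∧
      dist (w i k) pv ≤ x * ‖p i‖ + (2 * (m:ℝ) - 2) + 1/8 := by
    intro i k
    have htgt_pv : tgt i k - pv = x • p i + ((k:ℝ) * 2) • e₁ := by
      rw [htgtdef]; simp only [add_sub_cancel_left, add_assoc]
    have h1 : |‖x • p i + ((k:ℝ) * 2) • e₁‖ - ‖x • p i‖| ≤ ‖((k:ℝ) * 2) • e₁‖ := by
      simpa using abs_norm_sub_norm_le (x • p i + ((k:ℝ) * 2) • e₁) (x • p i)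
    rw [hxsmul] at h1
    have h2 : ‖((k:ℝ) * 2) • e₁‖ ≤ 2 * (m:ℝ) - 2 := by
      rw [hcsmul, abs_of_nonneg (by positivity)]
      have := (hkabs k).2; linarith
    have h1' := abs_le.mp h1
    have hA : dist (w i k) pv ≤ dist (w i k) (tgt i k) + dist (tgt i k) pv :=
      dist_triangle _ _ _
    have hB : dist (tgt i k) pv ≤ dist (tgt i k) (w i k) + dist (w i k) pv :=
      dist_triangle _ _ _
    rw [dist_comm (tgt i k) (w i k)] at hB
    have hdt : dist (tgt i k) pv = ‖tgt i k - pv‖ := dist_eq_norm _ _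
    rw [htgt_pv] at hdt
    have h3 := hw2' i k
    constructor <;> [linarith [h1'.1]; linarith [h1'.2]]
  have hwpv1 : ∀ i k, 1 ≤ dist (w i k) pv := by
    intro i k
    have h := (hwpv i k).1
    have := hpxl i
    linarith
  have hwpvx : ∀ i k, dist (w i k) pv ≤ x := by
    intro i k
    have h := (hwpv i k).2
    have := hpxu i
    nlinarith
  -- snapped points are vertices
  have hwnorm : ∀ i k, ‖w i k‖ ≤ (n:ℝ) := by
    intro i k
    have h1 := dist_triangle (w i k) pv 0
    rw [dist_zero_right, dist_zero_right] at h1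
    have := hwpvx i k
    linarith
  set zz : Fin (Ngamma d γ) → Fin m → GndVert d n ε :=
    fun i k => ⟨w i k, hw1 i k, hwnorm i k⟩ with hzzdef
  -- within-slot distances
  have hslot : ∀ i (k l : Fin m), k ≠ l →
      1 ≤ dist (w i k) (w i l) ∧ dist (w i k) (w i l) ≤ x := by
    intro i k l hkl
    have hdiff : tgt i k - tgt i l = (((k:ℝ) - (l:ℝ)) * 2) • e₁ := by
      rw [htgtdef]
      simp only []
      module
    have hnd : dist (tgt i k) (tgt i l) = |(k:ℝ) - (l:ℝ)| * 2 := by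
      rw [dist_eq_norm, hdiff, hcsmul, abs_mul]
      norm_num
    have hklr := habs k l hkl
    have h1 : dist (w i k) (w i l) ≤ dist (w i k) (tgt i k) + dist (tgt i k) (tgt i l)
        + dist (tgt i l) (w i l) := dist_triangle4 _ _ _ _
    have h2 : dist (tgt i k) (tgt i l) ≤ dist (tgt i k) (w i k) + dist (w i k) (w i l)
        + dist (w i l) (tgt i l) := dist_triangle4 _ _ _ _
    rw [dist_comm (tgt i k) (w i k)] at h2
    rw [dist_comm (tgt i l) (w i l)] at h1
    have e1 := hw2' i k
    have e2 := hw2' i l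
    rw [hnd] at h1 h2
    constructor
    · linarith [hklr.1]
    · linarith [hklr.2]
  -- cross-slot distances
  have hcross : ∀ (i j : Fin (Ngamma d γ)) (k l : Fin m), i ≠ j →
      x < dist (w i k) (w j l) := by
    intro i j k l hij
    have hdiff : tgt i k - tgt j l = x • (p i - p j) + (((k:ℝ) - (l:ℝ)) * 2) • e₁ := by
      rw [htgtdef]
      simp only []
      module
    have hkl2 : ‖(((k:ℝ) - (l:ℝ)) * 2) • e₁‖ ≤ 2 * (m:ℝ) := by
      rw [hcsmul, abs_mul]
      have h1 : |(k:ℝ) - (l:ℝ)| ≤ (m:ℝ) - 1 := by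
        have := (hkabs k).1; have := (hkabs k).2
        have := (hkabs l).1; have := (hkabs l).2
        rw [abs_le]; constructor <;> linarith
      rw [abs_of_nonneg (by norm_num : (0:ℝ) ≤ 2)]
      nlinarith [abs_nonneg ((k:ℝ) - (l:ℝ))]
    have hbig : (1 + θ) * x ≤ ‖x • (p i - p j)‖ := by
      rw [hxsmul]; exact hsepx i j hij
    have h1 : |‖x • (p i - p j) + (((k:ℝ) - (l:ℝ)) * 2) • e₁‖ - ‖x • (p i - p j)‖|
        ≤ ‖(((k:ℝ) - (l:ℝ)) * 2) • e₁‖ := by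
      simpa using abs_norm_sub_norm_le
        (x • (p i - p j) + (((k:ℝ) - (l:ℝ)) * 2) • e₁) (x • (p i - p j))
    have h1' := (abs_le.mp h1).1
    have hlow : (1 + θ) * x - 2 * (m:ℝ) ≤ ‖tgt i k - tgt j l‖ := by
      rw [hdiff]; linarith
    have htri : ‖tgt i k - tgt j l‖ ≤ dist (tgt i k) (w i k) + dist (w i k) (w j l)
        + dist (w j l) (tgt j l) := by
      rw [← dist_eq_norm]
      exact dist_triangle4 _ _ _ _
    rw [dist_comm (tgt i k) (w i k)] at htri
    have e1 := hw2' i k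
    have e2 := hw2' j l
    have : x + 8 * (μ * x) - 2 * (m:ℝ) - 1/4 ≤ dist (w i k) (w j l) := by
      have : θ * x ≥ 8 * (μ * x) := hθx
      nlinarith
    linarith
  -- graph-theoretic consequences
  have hne_slot : ∀ i (k l : Fin m), k ≠ l → zz i k ≠ zz i l := by
    intro i k l hkl h
    have h1 := (hslot i k l hkl).1
    have hval : w i k = w i l := congrArg Subtype.val h
    rw [hval, dist_self] at h1
    linarith
  have hadj_slot : ∀ i (k l : Fin m), k ≠ l → (Gnd d n x ε).Adj (zz i k) (zz i l) :=
    fun i k l hkl => ⟨hne_slot i k l hkl,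
      Set.mem_Icc.mpr ⟨(hslot i k l hkl).1, (hslot i k l hkl).2⟩⟩
  have hne_cross : ∀ (i j : Fin (Ngamma d γ)) (k l : Fin m), i ≠ j → zz i k ≠ zz j l := by
    intro i j k l hij h
    have h1 := hcross i j k l hij
    have hval : w i k = w j l := congrArg Subtype.val h
    rw [hval, dist_self] at h1
    linarith
  have himg_slot : ∀ i (k l : Fin m), k ≠ l →
      1 ≤ dist (f (zz i k)) (f (zz i l)) := by
    intro i k l hkl
    have := (hf.2 _ _ (hne_slot i k l hkl)).mp (hadj_slot i k l hkl)
    exact (Set.mem_Icc.mp this).1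
  have himg_cross : ∀ (i j : Fin (Ngamma d γ)) (k l : Fin m), i ≠ j →
      1 ≤ dist (f (zz i k)) (f (zz j l)) → y < dist (f (zz i k)) (f (zz j l)) := by
    intro i j k l hij h1
    by_contra hle
    push_neg at hle
    have hadj : (Gnd d n x ε).Adj (zz i k) (zz j l) :=
      (hf.2 _ _ (hne_cross i j k l hij)).mpr (Set.mem_Icc.mpr ⟨h1, hle⟩)
    have h2 := (Set.mem_Icc.mp hadj.2).2
    exact absurd h2 (not_le.2 (hcross i j k l hij))
  -- greedy selection of representatives
  have sel : ∀ j : ℕ, j ≤ Ngamma d γ → ∃ r : Fin (Ngamma d γ) → Fin m,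
      ∀ a b : Fin (Ngamma d γ), (a:ℕ) < j → (b:ℕ) < j → a ≠ b →
        y < dist (f (zz a (r a))) (f (zz b (r b))) := by
    intro j
    induction j with
    | zero => exact fun _ => ⟨fun _ => ⟨0, hm1⟩, fun a b ha _ _ => absurd ha (by omega)⟩
    | succ j ih =>
      intro hjN
      obtain ⟨r, hr⟩ := ih (by omega)
      have hjN' : j < Ngamma d γ := by omega
      set jj : Fin (Ngamma d γ) := ⟨j, hjN'⟩ with hjjdef
      have hgood : ∃ k : Fin m, ∀ a : Fin (Ngamma d γ), (a:ℕ) < j →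
          1 ≤ dist (f (zz jj k)) (f (zz a (r a))) := by
        by_contra hcon
        push_neg at hcon
        choose A hA1 hA2 using hcon
        have hsub : (Finset.univ : Finset (Fin m)) ⊆
            (Finset.univ.filter (fun a : Fin (Ngamma d γ) => (a:ℕ) < j)).biUnion
              (fun a => Finset.univ.filter (fun k : Fin m => A k = a)) := by
          intro k _
          rw [Finset.mem_biUnion]
          exact ⟨A k, by simp [hA1 k], by simp⟩
        have hcard1 : ∀ a : Fin (Ngamma d γ),
            (Finset.univ.filter (fun k : Fin m => A k = a)).card ≤ K := by
          intro a
          set Fa := Finset.univ.filter (fun k : Fin m => A k = a) with hFadef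
          have hinj : Set.InjOn (fun k => f (zz jj k)) ↑Fa := by
            intro k _ k' _ h
            by_contra hkk
            exact hne_slot jj k k' hkk (hf.1 h)
          have hcardim : (Fa.image (fun k => f (zz jj k))).card = Fa.card :=
            Finset.card_image_of_injOn hinj
          rw [← hcardim]
          refine hK (f (zz a (r a))) _ ?_ ?_
          · intro q hq
            obtain ⟨k, hk1, hk2⟩ := Finset.mem_image.mp hq
            have hka : A k = a := (Finset.mem_filter.mp hk1).2
            have := hA2 k
            rw [hka] at this
            rw [← hk2]
            linarith
          · intro q hq q' hq' hqq
            obtain ⟨k, hk1, hk2⟩ := Finset.mem_image.mp hq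
            obtain ⟨k', hk1', hk2'⟩ := Finset.mem_image.mp hq'
            have hkk : k ≠ k' := by
              intro h; rw [h] at hk2; rw [hk2] at hk2'; exact hqq hk2'
            rw [← hk2, ← hk2']
            exact himg_slot jj k k' hkk
        have hcard2 : (Finset.univ.filter
            (fun a : Fin (Ngamma d γ) => (a:ℕ) < j)).card ≤ j := by
          have := Finset.card_le_card_of_injOn (fun a : Fin (Ngamma d γ) => (a:ℕ))
            (s := Finset.univ.filter (fun a : Fin (Ngamma d γ) => (a:ℕ) < j))
            (t := Finset.range j)
            (fun a ha => Finset.mem_range.mpr (Finset.mem_filter.mp ha).2)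
            (fun a _ b _ h => Fin.ext h)
          simpa using this
        have hchain : m ≤ j * K := by
          calc m = (Finset.univ : Finset (Fin m)).card := by
                rw [Finset.card_univ, Fintype.card_fin]
            _ ≤ ((Finset.univ.filter (fun a : Fin (Ngamma d γ) => (a:ℕ) < j)).biUnion
                  (fun a => Finset.univ.filter (fun k : Fin m => A k = a))).card :=
                Finset.card_le_card hsub
            _ ≤ ∑ a ∈ Finset.univ.filter (fun a : Fin (Ngamma d γ) => (a:ℕ) < j),
                  (Finset.univ.filter (fun k : Fin m => A k = a)).card :=
                Finset.card_biUnion_le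
            _ ≤ (Finset.univ.filter
                  (fun a : Fin (Ngamma d γ) => (a:ℕ) < j)).card * K := by
                rw [← smul_eq_mul]
                exact Finset.sum_le_card_nsmul _ _ _ (fun a _ => hcard1 a)
            _ ≤ j * K := Nat.mul_le_mul_right K hcard2
        have hfin : j * K ≤ (Ngamma d γ - 1) * K :=
          Nat.mul_le_mul_right K (by omega)
        omega
      obtain ⟨k, hk⟩ := hgood
      refine ⟨Function.update r jj k, ?_⟩
      intro a b ha hb hab
      have hupd : ∀ c : Fin (Ngamma d γ), Function.update r jj k c
          = if c = jj then k else r c := fun c => Function.update_apply r jj k c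
      by_cases haj : a = jj
      · by_cases hbj : b = jj
        · exact absurd (haj.trans hbj.symm) hab
        · have hbj' : (b:ℕ) < j := by
            have := Fin.val_ne_of_ne hbj
            rw [hjjdef] at this
            simp at this
            omega
          have hij : jj ≠ b := by
            intro h
            have := congrArg Fin.val h
            simp only [hjjdef] at this
            omega
          rw [hupd a, hupd b, if_pos haj, if_neg hbj, haj]
          exact himg_cross jj b k (r b) hij (hk b hbj')
      · have haj' : (a:ℕ) < j := by
          have := Fin.val_ne_of_ne haj
          simp only [hjjdef] at this
          omega
        by_cases hbj : b = jj
        · have hij : jj ≠ a := by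
            intro h
            have := congrArg Fin.val h
            simp only [hjjdef] at this
            omega
          rw [hupd a, hupd b, if_pos hbj, if_neg haj, hbj, dist_comm]
          exact himg_cross jj a k (r a) hij (hk a haj')
        · have hbj' : (b:ℕ) < j := by
            have := Fin.val_ne_of_ne hbj
            simp only [hjjdef] at this
            omega
          rw [hupd a, hupd b, if_neg haj, if_neg hbj]
          exact hr a b haj' hbj' hab
  -- assemble the final set
  obtain ⟨r, hr⟩ := sel (Ngamma d γ) le_rfl
  set T : Finset (GndVert d n ε) :=
    Finset.image (fun i : Fin (Ngamma d γ) => zz i (r i)) Finset.univ with hTdef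
  have hTcard : T.card = Ngamma d γ := by
    rw [hTdef, Finset.card_image_of_injOn, Finset.card_univ, Fintype.card_fin]
    intro i _ i' _ h
    by_contra hii
    exact hne_cross i i' (r i) (r i') hii h
  refine ⟨T, hTcard, ?_, ?_⟩
  · intro u hu
    obtain ⟨i, _, hiu⟩ := Finset.mem_image.mp hu
    have h1 := hwpv1 i (r i)
    have h2 := hwpvx i (r i)
    have hneuv : u ≠ v := by
      intro h
      have : u.1 = pv := h ▸ hv
      rw [← hiu] at this
      have hval : w i (r i) = pv := this
      rw [hval, dist_self] at h1
      linarith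
    refine ⟨hneuv, Set.mem_Icc.mpr ?_⟩
    rw [← hiu, hv]
    exact ⟨h1, h2⟩
  · intro u hu w' hw'
    obtain ⟨i, _, hiu⟩ := Finset.mem_image.mp hu
    obtain ⟨i', _, hiw⟩ := Finset.mem_image.mp hw'
    intro huw
    have hii : i ≠ i' := by
      intro h
      rw [h] at hiu
      rw [hiu] at hiw
      exact huw hiw
    constructor
    · rw [← hiu, ← hiw]
      exact hcross i i' (r i) (r i') hii
    · rw [← hiu, ← hiw]
      have h1 := himg_slot
      by_cases h1le : 1 ≤ dist (f (zz i (r i))) (f (zz i' (r i')))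
      · exact himg_cross i i' (r i) (r i') hii h1le
      · exact absurd (le_of_lt (hr i i' i.isLt i'.isLt hii)) (by push_neg at h1le; intro hcon; linarith [hr i i' i.isLt i'.isLt hii])
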